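/- arXiv:2512.01964 — 5 statements merged into one kernel-verified Lean document; each statement's English description precedes it below -/
import Mathlib

section
/- Let u be a classical solution of the hybrid Euler–Bernoulli beam system. Then the energy E is differentiable on [0,∞) and for every t ≥ 0: E'(t) = −γ·u_t(0,t)² − d·γ*·u_xt(0,t)² − d·γ·u_t(0,t)·u_xt(0,t). -/
open MeasureTheory

/-- Partial derivative in the time variable (second argument). -/
noncomputable def pdt (u : ℝ → ℝ → ℝ) (x t : ℝ) : ℝ := deriv (fun s => u x s) t

/-- Partial derivative in the space variable (first argument). -/
noncomputable def pdx (u : ℝ → ℝ → ℝ) (x t : ℝ) : ℝ := deriv (fun y => u y t) x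

/-- The energy of the hybrid Euler–Bernoulli beam with tip body. -/
noncomputable def energy (ℓ α m d J : ℝ) (u : ℝ → ℝ → ℝ) (t : ℝ) : ℝ :=
  (1 / 2) * (∫ x in (0:ℝ)..ℓ, ((pdt u x t) ^ 2 + α * (pdx (pdx u) x t) ^ 2)) +
    (m / 2) * (pdt u 0 t) ^ 2 + m * d * (pdt (pdx u) 0 t) * (pdt u 0 t) +
    ((J + m * d ^ 2) / 2) * (pdt (pdx u) 0 t) ^ 2

namespace EB

open Function Set

variable {v : ℝ → ℝ → ℝ}

lemma sect_t (hv : ContDiff ℝ (⊤ : ℕ∞) (uncurry v)) (x t : ℝ) :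
    HasDerivAt (fun s => v x s) (fderiv ℝ (uncurry v) (x, t) (0, 1)) t := by
  have h1 : HasDerivAt (fun s : ℝ => ((x : ℝ), s)) ((0 : ℝ), (1 : ℝ)) t :=
    (hasDerivAt_const t x).prodMk (hasDerivAt_id t)
  exact (hv.differentiable (by simp) (x, t)).hasFDerivAt.comp_hasDerivAt t h1

lemma sect_x (hv : ContDiff ℝ (⊤ : ℕ∞) (uncurry v)) (x t : ℝ) :
    HasDerivAt (fun y => v y t) (fderiv ℝ (uncurry v) (x, t) (1, 0)) x := by
  have h1 : HasDerivAt (fun y : ℝ => (y, t)) ((1 : ℝ), (0 : ℝ)) x :=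
    (hasDerivAt_id x).prodMk (hasDerivAt_const x t)
  exact (hv.differentiable (by simp) (x, t)).hasFDerivAt.comp_hasDerivAt x h1

lemma pdt_eq (hv : ContDiff ℝ (⊤ : ℕ∞) (uncurry v)) (x t : ℝ) :
    pdt v x t = fderiv ℝ (uncurry v) (x, t) (0, 1) := (sect_t hv x t).deriv

lemma pdx_eq (hv : ContDiff ℝ (⊤ : ℕ∞) (uncurry v)) (x t : ℝ) :
    pdx v x t = fderiv ℝ (uncurry v) (x, t) (1, 0) := (sect_x hv x t).deriv

lemma hasDerivAt_pdt (hv : ContDiff ℝ (⊤ : ℕ∞) (uncurry v)) (x t : ℝ) :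
    HasDerivAt (fun s => v x s) (pdt v x t) t := by
  rw [pdt_eq hv]; exact sect_t hv x t

lemma hasDerivAt_pdx (hv : ContDiff ℝ (⊤ : ℕ∞) (uncurry v)) (x t : ℝ) :
    HasDerivAt (fun y => v y t) (pdx v x t) x := by
  rw [pdx_eq hv]; exact sect_x hv x t

lemma contDiff_pdt (hv : ContDiff ℝ (⊤ : ℕ∞) (uncurry v)) : ContDiff ℝ (⊤ : ℕ∞) (uncurry (pdt v)) := by
  have h : uncurry (pdt v) = fun p : ℝ × ℝ => fderiv ℝ (uncurry v) p ((0 : ℝ), (1 : ℝ)) := by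
    funext p; exact pdt_eq hv p.1 p.2
  rw [h]
  exact (hv.fderiv_right (by simp)).clm_apply contDiff_const

lemma contDiff_pdx (hv : ContDiff ℝ (⊤ : ℕ∞) (uncurry v)) : ContDiff ℝ (⊤ : ℕ∞) (uncurry (pdx v)) := by
  have h : uncurry (pdx v) = fun p : ℝ × ℝ => fderiv ℝ (uncurry v) p ((1 : ℝ), (0 : ℝ)) := by
    funext p; exact pdx_eq hv p.1 p.2
  rw [h]
  exact (hv.fderiv_right (by simp)).clm_apply contDiff_const

lemma cont_sect_x (hv : ContDiff ℝ (⊤ : ℕ∞) (uncurry v)) (t : ℝ) :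
    Continuous fun x => v x t :=
  hv.continuous.comp (continuous_id.prodMk continuous_const)

lemma pdt_pdx_comm (hv : ContDiff ℝ (⊤ : ℕ∞) (uncurry v)) (x t : ℝ) :
    pdt (pdx v) x t = pdx (pdt v) x t := by
  have hd : ∀ p, HasFDerivAt (uncurry v) (fderiv ℝ (uncurry v) p) p :=
    fun p => (hv.differentiable (by simp) p).hasFDerivAt
  have h2 : HasFDerivAt (fderiv ℝ (uncurry v)) (fderiv ℝ (fderiv ℝ (uncurry v)) (x, t)) (x, t) :=
    (((hv.fderiv_right (m := (⊤ : ℕ∞)) (by simp)).differentiable (by simp)) (x, t)).hasFDerivAt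
  have hsymm := second_derivative_symmetric hd h2 ((0 : ℝ), (1 : ℝ)) ((1 : ℝ), (0 : ℝ))
  have hcurve : HasDerivAt (fun s : ℝ => ((x : ℝ), s)) ((0 : ℝ), (1 : ℝ)) t :=
    (hasDerivAt_const t x).prodMk (hasDerivAt_id t)
  have hc : HasDerivAt (fun s : ℝ => fderiv ℝ (uncurry v) (x, s))
      (fderiv ℝ (fderiv ℝ (uncurry v)) (x, t) (0, 1)) t := h2.comp_hasDerivAt t hcurve
  have hA : HasDerivAt (fun s : ℝ => fderiv ℝ (uncurry v) (x, s) ((1 : ℝ), (0 : ℝ)))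
      (fderiv ℝ (fderiv ℝ (uncurry v)) (x, t) (0, 1) ((1 : ℝ), (0 : ℝ))) t := by
    simpa using hc.clm_apply (hasDerivAt_const t ((1 : ℝ), (0 : ℝ)))
  have hcurve' : HasDerivAt (fun y : ℝ => (y, t)) ((1 : ℝ), (0 : ℝ)) x :=
    (hasDerivAt_id x).prodMk (hasDerivAt_const x t)
  have hc' : HasDerivAt (fun y : ℝ => fderiv ℝ (uncurry v) (y, t))
      (fderiv ℝ (fderiv ℝ (uncurry v)) (x, t) (1, 0)) x := h2.comp_hasDerivAt x hcurve'
  have hB : HasDerivAt (fun y : ℝ => fderiv ℝ (uncurry v) (y, t) ((0 : ℝ), (1 : ℝ)))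
      (fderiv ℝ (fderiv ℝ (uncurry v)) (x, t) (1, 0) ((0 : ℝ), (1 : ℝ))) x := by
    simpa using hc'.clm_apply (hasDerivAt_const x ((0 : ℝ), (1 : ℝ)))
  have e1 : pdt (pdx v) x t
      = fderiv ℝ (fderiv ℝ (uncurry v)) (x, t) (0, 1) ((1 : ℝ), (0 : ℝ)) := by
    have hfun : (fun s : ℝ => pdx v x s)
        = fun s : ℝ => fderiv ℝ (uncurry v) (x, s) ((1 : ℝ), (0 : ℝ)) := by
      funext s; exact pdx_eq hv x s
    show deriv (fun s => pdx v x s) t = _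
    rw [hfun]; exact hA.deriv
  have e2 : pdx (pdt v) x t
      = fderiv ℝ (fderiv ℝ (uncurry v)) (x, t) (1, 0) ((0 : ℝ), (1 : ℝ)) := by
    have hfun : (fun y : ℝ => pdt v y t)
        = fun y : ℝ => fderiv ℝ (uncurry v) (y, t) ((0 : ℝ), (1 : ℝ)) := by
      funext y; exact pdt_eq hv y t
    show deriv (fun y => pdt v y t) x = _
    rw [hfun]; exact hB.deriv
  rw [e1, e2]; exact hsymm

/-- Differentiation under the interval integral for a smooth two-variable function. -/
lemma hasDerivAt_int (hv : ContDiff ℝ (⊤ : ℕ∞) (uncurry v)) (ℓ t₀ : ℝ) :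
    HasDerivAt (fun t => ∫ x in (0:ℝ)..ℓ, v x t) (∫ x in (0:ℝ)..ℓ, pdt v x t₀) t₀ := by
  obtain ⟨C, hC⟩ :=
    ((isCompact_uIcc (a := (0:ℝ)) (b := ℓ)).prod
      (isCompact_closedBall t₀ 1)).exists_bound_of_continuousOn
      ((contDiff_pdt hv).continuous.continuousOn)
  refine (intervalIntegral.hasDerivAt_integral_of_dominated_loc_of_deriv_le
      (F := fun t x => v x t) (F' := fun t x => pdt v x t) (bound := fun _ => C)
      (Metric.ball_mem_nhds t₀ one_pos) ?_ ?_ ?_ ?_ ?_ ?_).2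
  · exact Filter.Eventually.of_forall fun t => (cont_sect_x hv t).aestronglyMeasurable
  · exact (cont_sect_x hv t₀).intervalIntegrable _ _
  · exact (cont_sect_x (contDiff_pdt hv) t₀).aestronglyMeasurable
  · refine ae_of_all _ fun y hy s hs => ?_
    exact hC (y, s) ⟨uIoc_subset_uIcc hy, Metric.ball_subset_closedBall hs⟩
  · exact intervalIntegrable_const
  · exact ae_of_all _ fun y _ s _ => hasDerivAt_pdt hv y s

/-- If a differentiable function vanishes on `[0, ∞)` then its derivative vanishes there too. -/
lemma deriv_zero_of_zero_on_Ici {f : ℝ → ℝ} {t : ℝ} (hf : DifferentiableAt ℝ f t)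
    (h0 : ∀ s ≥ (0:ℝ), f s = 0) (ht : 0 ≤ t) : deriv f t = 0 := by
  have hU : UniqueDiffWithinAt ℝ (Set.Ici (0:ℝ)) t := uniqueDiffOn_Ici 0 t ht
  have h1 : HasDerivWithinAt f 0 (Set.Ici (0:ℝ)) t :=
    (hasDerivWithinAt_const t _ (0:ℝ)).congr (fun s hs => h0 s hs) (h0 t ht)
  have h2 : HasDerivWithinAt f (deriv f t) (Set.Ici (0:ℝ)) t :=
    hf.hasDerivAt.hasDerivWithinAt
  rw [← h2.derivWithin hU]; exact h1.derivWithin hU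

end EB

/-- For a classical solution of the hybrid Euler–Bernoulli beam system, the energy is
differentiable on `[0,∞)` with
`E'(t) = −γ u_t(0,t)² − d γ* u_xt(0,t)² − d γ u_t(0,t) u_xt(0,t)`. -/
theorem energy_derivative (ℓ α m d J γ γs : ℝ)
    (hℓ : 0 < ℓ) (hα : 0 < α) (hm : 0 < m) (hd : 0 < d) (hJ : 0 < J)
    (hγ : 0 < γ) (hγs : 0 < γs)
    (u : ℝ → ℝ → ℝ) (hu : ContDiff ℝ (⊤ : ℕ∞) (Function.uncurry u))
    (heq : ∀ x ∈ Set.Icc (0:ℝ) ℓ, ∀ t ≥ (0:ℝ),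
      pdt (pdt u) x t + α * pdx (pdx (pdx (pdx u))) x t = 0)
    (hbc1 : ∀ t ≥ (0:ℝ),
      m * pdt (pdt u) 0 t + m * d * pdt (pdt (pdx u)) 0 t + γ * pdt u 0 t +
        α * pdx (pdx (pdx u)) 0 t = 0)
    (hbc2 : ∀ t ≥ (0:ℝ),
      m * d * pdt (pdt u) 0 t + (J + m * d ^ 2) * pdt (pdt (pdx u)) 0 t +
        d * γ * pdt u 0 t + d * γs * pdt (pdx u) 0 t - α * pdx (pdx u) 0 t = 0)
    (hclamp : ∀ t ≥ (0:ℝ), u ℓ t = 0 ∧ pdx u ℓ t = 0) :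
    ∀ t ≥ (0:ℝ),
      HasDerivWithinAt (energy ℓ α m d J u)
        (-γ * (pdt u 0 t) ^ 2 - d * γs * (pdt (pdx u) 0 t) ^ 2
          - d * γ * (pdt u 0 t) * (pdt (pdx u) 0 t)) (Set.Ici 0) t := by
  intro t₀ ht₀
  -- smoothness of the iterated partial derivatives
  have h1x : ContDiff ℝ (⊤ : ℕ∞) (Function.uncurry (pdx u)) := EB.contDiff_pdx hu
  have h2x : ContDiff ℝ (⊤ : ℕ∞) (Function.uncurry (pdx (pdx u))) := EB.contDiff_pdx h1x
  have h3x : ContDiff ℝ (⊤ : ℕ∞) (Function.uncurry (pdx (pdx (pdx u)))) := EB.contDiff_pdx h2x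
  have h4x : ContDiff ℝ (⊤ : ℕ∞) (Function.uncurry (pdx (pdx (pdx (pdx u))))) := EB.contDiff_pdx h3x
  have ht1 : ContDiff ℝ (⊤ : ℕ∞) (Function.uncurry (pdt u)) := EB.contDiff_pdt hu
  have hxt : ContDiff ℝ (⊤ : ℕ∞) (Function.uncurry (pdt (pdx u))) := EB.contDiff_pdt h1x
  have h1xt : ContDiff ℝ (⊤ : ℕ∞) (Function.uncurry (pdx (pdt u))) := EB.contDiff_pdx ht1
  have hxxt : ContDiff ℝ (⊤ : ℕ∞) (Function.uncurry (pdt (pdx (pdx u)))) := EB.contDiff_pdt h2x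
  -- commutation of partials
  have hcomm : pdx (pdt u) = pdt (pdx u) :=
    funext fun x => funext fun t => (EB.pdt_pdx_comm hu x t).symm
  have hcomm' : pdx (pdt (pdx u)) = pdt (pdx (pdx u)) :=
    funext fun x => funext fun t => (EB.pdt_pdx_comm h1x x t).symm
  have hcomm2 : pdx (pdx (pdt u)) = pdt (pdx (pdx u)) := by rw [hcomm, hcomm']
  -- the integrand of the energy
  set g : ℝ → ℝ → ℝ := fun x t => (pdt u x t) ^ 2 + α * (pdx (pdx u) x t) ^ 2 with hg_def
  have hg : ContDiff ℝ (⊤ : ℕ∞) (Function.uncurry g) := by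
    have hgu : Function.uncurry g = fun p : ℝ × ℝ =>
        (Function.uncurry (pdt u) p) ^ 2 + α * (Function.uncurry (pdx (pdx u)) p) ^ 2 := rfl
    rw [hgu]
    exact (ht1.pow 2).add (contDiff_const.mul (h2x.pow 2))
  have hI : HasDerivAt (fun t => ∫ x in (0:ℝ)..ℓ, g x t) (∫ x in (0:ℝ)..ℓ, pdt g x t₀) t₀ :=
    EB.hasDerivAt_int hg ℓ t₀
  -- pointwise time-derivative of the integrand
  have hpg : ∀ x : ℝ, pdt g x t₀ =
      2 * pdt u x t₀ * pdt (pdt u) x t₀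
        + 2 * α * (pdx (pdx u) x t₀ * pdt (pdx (pdx u)) x t₀) := by
    intro x
    have hA : HasDerivAt (fun s => g x s)
        (2 * pdt u x t₀ * pdt (pdt u) x t₀
          + 2 * α * (pdx (pdx u) x t₀ * pdt (pdx (pdx u)) x t₀)) t₀ := by
      have h1 := (EB.hasDerivAt_pdt ht1 x t₀).pow 2
      have h2 := ((EB.hasDerivAt_pdt h2x x t₀).pow 2).const_mul α
      have h3 := h1.add h2
      refine h3.congr_deriv ?_
      push_cast
      ring
    exact hA.deriv
  -- boundary values at x = ℓ
  have haℓ : pdt u ℓ t₀ = 0 :=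
    EB.deriv_zero_of_zero_on_Ici (f := fun s => u ℓ s)
      (EB.hasDerivAt_pdt hu ℓ t₀).differentiableAt (fun s hs => (hclamp s hs).1) ht₀
  have hbℓ : pdt (pdx u) ℓ t₀ = 0 :=
    EB.deriv_zero_of_zero_on_Ici (f := fun s => pdx u ℓ s)
      (EB.hasDerivAt_pdt h1x ℓ t₀).differentiableAt (fun s hs => (hclamp s hs).2) ht₀
  have hcℓ : pdx (pdt u) ℓ t₀ = 0 := by rw [hcomm]; exact hbℓ
  have hb0 : pdx (pdt u) 0 t₀ = pdt (pdx u) 0 t₀ := by rw [hcomm]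
  -- integration by parts (twice)
  have ibp1 := intervalIntegral.integral_mul_deriv_eq_deriv_mul
    (a := (0:ℝ)) (b := ℓ)
    (u := fun x => pdt u x t₀) (v := fun x => pdx (pdx (pdx u)) x t₀)
    (u' := fun x => pdx (pdt u) x t₀) (v' := fun x => pdx (pdx (pdx (pdx u))) x t₀)
    (fun x _ => EB.hasDerivAt_pdx ht1 x t₀) (fun x _ => EB.hasDerivAt_pdx h3x x t₀)
    ((EB.cont_sect_x h1xt t₀).intervalIntegrable 0 ℓ)
    ((EB.cont_sect_x h4x t₀).intervalIntegrable 0 ℓ)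
  have ibp2 := intervalIntegral.integral_mul_deriv_eq_deriv_mul
    (a := (0:ℝ)) (b := ℓ)
    (u := fun x => pdx (pdt u) x t₀) (v := fun x => pdx (pdx u) x t₀)
    (u' := fun x => pdx (pdx (pdt u)) x t₀) (v' := fun x => pdx (pdx (pdx u)) x t₀)
    (fun x _ => EB.hasDerivAt_pdx h1xt x t₀) (fun x _ => EB.hasDerivAt_pdx h2x x t₀)
    ((EB.cont_sect_x (EB.contDiff_pdx h1xt) t₀).intervalIntegrable 0 ℓ)
    ((EB.cont_sect_x h3x t₀).intervalIntegrable 0 ℓ)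
  beta_reduce at ibp1 ibp2
  have etail : ∫ x in (0:ℝ)..ℓ, pdx (pdx (pdt u)) x t₀ * pdx (pdx u) x t₀
      = ∫ x in (0:ℝ)..ℓ, pdx (pdx u) x t₀ * pdt (pdx (pdx u)) x t₀ := by
    apply intervalIntegral.integral_congr
    intro x _
    beta_reduce
    rw [hcomm2, mul_comm]
  -- the key value of the integral of the time derivative of the integrand
  have hkey : ∫ x in (0:ℝ)..ℓ, pdt g x t₀
      = 2 * α * (pdt u 0 t₀ * pdx (pdx (pdx u)) 0 t₀)
        - 2 * α * (pdt (pdx u) 0 t₀ * pdx (pdx u) 0 t₀) := by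
    have e1 : ∫ x in (0:ℝ)..ℓ, pdt g x t₀ =
        ∫ x in (0:ℝ)..ℓ, ((-2 * α) * (pdt u x t₀ * pdx (pdx (pdx (pdx u))) x t₀)
          + (2 * α) * (pdx (pdx u) x t₀ * pdt (pdx (pdx u)) x t₀)) := by
      apply intervalIntegral.integral_congr
      intro x hx
      beta_reduce
      have hx' : x ∈ Set.Icc (0:ℝ) ℓ := by rwa [Set.uIcc_of_le hℓ.le] at hx
      have hpde := heq x hx' t₀ ht₀
      rw [hpg x]
      linear_combination (2 * pdt u x t₀) * hpde
    have i1 : IntervalIntegrable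
        (fun x => pdt u x t₀ * pdx (pdx (pdx (pdx u))) x t₀) volume 0 ℓ :=
      ((EB.cont_sect_x ht1 t₀).mul (EB.cont_sect_x h4x t₀)).intervalIntegrable 0 ℓ
    have i2 : IntervalIntegrable
        (fun x => pdx (pdx u) x t₀ * pdt (pdx (pdx u)) x t₀) volume 0 ℓ :=
      ((EB.cont_sect_x h2x t₀).mul (EB.cont_sect_x hxxt t₀)).intervalIntegrable 0 ℓ
    rw [e1, intervalIntegral.integral_add (i1.const_mul _) (i2.const_mul _),
      intervalIntegral.integral_const_mul, intervalIntegral.integral_const_mul]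
    rw [haℓ, zero_mul] at ibp1
    rw [hcℓ, zero_mul, hb0] at ibp2
    linear_combination (-2 * α) * ibp1 + (2 * α) * ibp2 + (-2 * α) * etail
  -- derivatives of the boundary (tip body) terms
  have ha' : HasDerivAt (fun t => pdt u 0 t) (pdt (pdt u) 0 t₀) t₀ :=
    EB.hasDerivAt_pdt ht1 0 t₀
  have hb' : HasDerivAt (fun t => pdt (pdx u) 0 t) (pdt (pdt (pdx u)) 0 t₀) t₀ :=
    EB.hasDerivAt_pdt hxt 0 t₀
  have h01 := hI.const_mul (1/2 : ℝ)
  have h02 := (ha'.pow 2).const_mul (m/2)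
  have h03 := ((hb'.const_mul (m * d)).mul ha')
  have h04 := (hb'.pow 2).const_mul ((J + m * d ^ 2)/2)
  have hE := ((h01.add h02).add h03).add h04
  refine HasDerivAt.hasDerivWithinAt ?_
  have hEn : HasDerivAt (energy ℓ α m d J u)
      ((1/2 : ℝ) * (∫ x in (0:ℝ)..ℓ, pdt g x t₀)
        + m/2 * ((2:ℕ) * pdt u 0 t₀ ^ (2-1) * pdt (pdt u) 0 t₀)
        + ((m * d * pdt (pdt (pdx u)) 0 t₀) * pdt u 0 t₀
            + (m * d * pdt (pdx u) 0 t₀) * pdt (pdt u) 0 t₀)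
        + (J + m * d ^ 2)/2 * ((2:ℕ) * pdt (pdx u) 0 t₀ ^ (2-1) * pdt (pdt (pdx u)) 0 t₀)) t₀ :=
    hE
  refine hEn.congr_deriv ?_
  symm
  rw [hkey]
  have hb1 := hbc1 t₀ ht₀
  have hb2 := hbc2 t₀ ht₀
  push_cast
  linear_combination (-(pdt u 0 t₀)) * hb1 + (-(pdt (pdx u) 0 t₀)) * hb2
end

section
/- Let u be a classical solution of the undamped hybrid Euler–Bernoulli beam system (i.e. with γ = γ* = 0). Then the energy is conserved: E(t) = E(0) for all t ≥ 0. -/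
open MeasureTheory Set Function

section tools

lemma infty_add_one : ((⊤:ℕ∞) : WithTop ℕ∞) + 1 ≤ ((⊤:ℕ∞) : WithTop ℕ∞) := by
  simp

lemma one_le_infty : (1 : WithTop ℕ∞) ≤ ((⊤:ℕ∞) : WithTop ℕ∞) := by
  exact_mod_cast (le_top : (1:ℕ∞) ≤ ⊤)

lemma two_le_infty : (2 : WithTop ℕ∞) ≤ ((⊤:ℕ∞) : WithTop ℕ∞) := by
  rw [show ((2:WithTop ℕ∞)) = (((2:ℕ∞)):WithTop ℕ∞) by norm_cast]
  exact_mod_cast (le_top : (2:ℕ∞) ≤ ⊤)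

variable {v : ℝ → ℝ → ℝ}

lemma sliceX (hv : ContDiff ℝ (⊤:ℕ∞) (uncurry v)) (t : ℝ) :
    ContDiff ℝ (⊤:ℕ∞) (fun x => v x t) :=
  hv.comp (contDiff_id.prodMk contDiff_const)

lemma sliceT (hv : ContDiff ℝ (⊤:ℕ∞) (uncurry v)) (x : ℝ) :
    ContDiff ℝ (⊤:ℕ∞) (fun s => v x s) :=
  hv.comp (contDiff_const.prodMk contDiff_id)

lemma hasDerivAt_pdx (hv : ContDiff ℝ (⊤:ℕ∞) (uncurry v)) (x t : ℝ) :
    HasDerivAt (fun y => v y t) (pdx v x t) x :=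
  (((sliceX hv t).differentiable (by simp)) x).hasDerivAt

lemma hasDerivAt_pdt (hv : ContDiff ℝ (⊤:ℕ∞) (uncurry v)) (x t : ℝ) :
    HasDerivAt (fun s => v x s) (pdt v x t) t :=
  (((sliceT hv x).differentiable (by simp)) t).hasDerivAt

lemma pdx_eq (hv : ContDiff ℝ (⊤:ℕ∞) (uncurry v)) (x t : ℝ) :
    pdx v x t = fderiv ℝ (uncurry v) (x, t) (1, 0) := by
  have h1 : HasFDerivAt (fun y : ℝ => (y, t))
      ((ContinuousLinearMap.id ℝ ℝ).prod 0) x :=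
    (hasFDerivAt_id x).prodMk (hasFDerivAt_const t x)
  have h2 := ((hv.differentiable (by simp)) (x, t)).hasFDerivAt
  have h3 : HasDerivAt (fun y => v y t)
      ((fderiv ℝ (uncurry v) (x, t)).comp ((ContinuousLinearMap.id ℝ ℝ).prod 0) 1) x :=
    by have := (h2.comp x h1).hasDerivAt; exact this
  have h4 := (hasDerivAt_pdx hv x t).unique h3
  simpa using h4

lemma pdt_eq (hv : ContDiff ℝ (⊤:ℕ∞) (uncurry v)) (x t : ℝ) :
    pdt v x t = fderiv ℝ (uncurry v) (x, t) (0, 1) := by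
  have h1 : HasFDerivAt (fun s : ℝ => (x, s))
      ((0 : ℝ →L[ℝ] ℝ).prod (ContinuousLinearMap.id ℝ ℝ)) t :=
    (hasFDerivAt_const x t).prodMk (hasFDerivAt_id t)
  have h2 := ((hv.differentiable (by simp)) (x, t)).hasFDerivAt
  have h3 : HasDerivAt (fun s => v x s)
      ((fderiv ℝ (uncurry v) (x, t)).comp ((0 : ℝ →L[ℝ] ℝ).prod (ContinuousLinearMap.id ℝ ℝ)) 1) t :=
    (h2.comp t h1).hasDerivAt
  have h4 := (hasDerivAt_pdt hv x t).unique h3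
  simpa using h4


lemma smooth_pdx (hv : ContDiff ℝ (⊤:ℕ∞) (uncurry v)) :
    ContDiff ℝ (⊤:ℕ∞) (uncurry (pdx v)) := by
  have h : uncurry (pdx v) = fun p : ℝ × ℝ => fderiv ℝ (uncurry v) p (1, 0) := by
    funext p
    exact pdx_eq hv p.1 p.2
  rw [h]
  exact (hv.fderiv_right infty_add_one).clm_apply contDiff_const

lemma smooth_pdt (hv : ContDiff ℝ (⊤:ℕ∞) (uncurry v)) :
    ContDiff ℝ (⊤:ℕ∞) (uncurry (pdt v)) := by
  have h : uncurry (pdt v) = fun p : ℝ × ℝ => fderiv ℝ (uncurry v) p (0, 1) := by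
    funext p
    exact pdt_eq hv p.1 p.2
  rw [h]
  exact (hv.fderiv_right infty_add_one).clm_apply contDiff_const

lemma clairaut (hv : ContDiff ℝ (⊤:ℕ∞) (uncurry v)) : pdt (pdx v) = pdx (pdt v) := by
  funext x t
  have hsym : IsSymmSndFDerivAt ℝ (uncurry v) (x, t) :=
    (hv.contDiffAt).isSymmSndFDerivAt (by rw [minSmoothness_of_isRCLikeNormedField]; exact two_le_infty)
  have hdf : Differentiable ℝ (fderiv ℝ (uncurry v)) :=
    (hv.fderiv_right infty_add_one).differentiable (by simp)
  have key : ∀ w : ℝ × ℝ, ∀ p : ℝ × ℝ,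
      fderiv ℝ (fun q : ℝ × ℝ => fderiv ℝ (uncurry v) q w) p
        = (ContinuousLinearMap.apply ℝ ℝ w).comp (fderiv ℝ (fderiv ℝ (uncurry v)) p) := by
    intro w p
    exact (((ContinuousLinearMap.apply ℝ ℝ w).hasFDerivAt).comp p (hdf p).hasFDerivAt).fderiv
  have e1 : pdt (pdx v) x t = fderiv ℝ (fderiv ℝ (uncurry v)) (x, t) (0, 1) (1, 0) := by
    rw [pdt_eq (smooth_pdx hv) x t]
    have h : uncurry (pdx v) = fun p : ℝ × ℝ => fderiv ℝ (uncurry v) p (1, 0) := by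
      funext p; exact pdx_eq hv p.1 p.2
    rw [h, key (1, 0) (x, t)]
    rfl
  have e2 : pdx (pdt v) x t = fderiv ℝ (fderiv ℝ (uncurry v)) (x, t) (1, 0) (0, 1) := by
    rw [pdx_eq (smooth_pdt hv) x t]
    have h : uncurry (pdt v) = fun p : ℝ × ℝ => fderiv ℝ (uncurry v) p (0, 1) := by
      funext p; exact pdt_eq hv p.1 p.2
    rw [h, key (0, 1) (x, t)]
    rfl
  rw [e1, e2, hsym (0,1) (1,0)]


lemma contSlice (hv : ContDiff ℝ (⊤:ℕ∞) (uncurry v)) (t : ℝ) :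
    Continuous (fun x => v x t) :=
  (sliceX hv t).continuous

lemma paramderiv {w : ℝ → ℝ → ℝ} (hv : ContDiff ℝ (⊤:ℕ∞) (uncurry v))
    (hw : ContDiff ℝ (⊤:ℕ∞) (uncurry w))
    (hd : ∀ x s : ℝ, HasDerivAt (fun r => v x r) (w x s) s) (ℓ t₀ : ℝ) :
    HasDerivAt (fun t => ∫ x in (0:ℝ)..ℓ, v x t) (∫ x in (0:ℝ)..ℓ, w x t₀) t₀ := by
  obtain ⟨C, hC⟩ :=
    ((isCompact_uIcc (a := (0:ℝ)) (b := ℓ)).prod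
      (isCompact_closedBall t₀ 1)).exists_bound_of_continuousOn
      (hw.continuous.continuousOn)
  have main := intervalIntegral.hasDerivAt_integral_of_dominated_loc_of_deriv_le
    (F := fun t x => v x t) (F' := fun t x => w x t) (x₀ := t₀) (a := 0) (b := ℓ)
    (bound := fun _ => C) (μ := volume) (Metric.ball_mem_nhds t₀ one_pos)
    (Filter.Eventually.of_forall fun t => ((contSlice hv t).aestronglyMeasurable))
    ((contSlice hv t₀).intervalIntegrable 0 ℓ)
    ((contSlice hw t₀).aestronglyMeasurable)
    (Filter.Eventually.of_forall fun x hx t ht =>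
      hC (x, t) ⟨uIoc_subset_uIcc hx, Metric.ball_subset_closedBall ht⟩)
    (intervalIntegrable_const)
    (Filter.Eventually.of_forall fun x _ t _ => hd x t)
  exact main.2

lemma derivZero {f : ℝ → ℝ} (hf : Differentiable ℝ f)
    (h0 : ∀ s, 0 ≤ s → f s = 0) {t : ℝ} (ht : 0 ≤ t) : deriv f t = 0 := by
  have uniq : UniqueDiffWithinAt ℝ (Ici t) t := uniqueDiffOn_Ici t t self_mem_Ici
  have h1 : HasDerivWithinAt f (deriv f t) (Ici t) t :=
    (hf t).hasDerivAt.hasDerivWithinAt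
  have h2 : HasDerivWithinAt f 0 (Ici t) t := by
    refine (hasDerivWithinAt_const t (Ici t) (0:ℝ)).congr (fun y hy => ?_) (h0 t ht)
    exact h0 y (le_trans ht hy)
  rw [← h1.derivWithin uniq, h2.derivWithin uniq]

end tools

/-- For a classical solution of the undamped (`γ = γ* = 0`) hybrid Euler–Bernoulli beam
system, the energy is conserved: `E(t) = E(0)` for all `t ≥ 0`. -/
theorem energy_conserved_undamped (ℓ α m d J : ℝ)
    (hℓ : 0 < ℓ) (hα : 0 < α) (hm : 0 < m) (hd : 0 < d) (hJ : 0 < J)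
    (u : ℝ → ℝ → ℝ) (hu : ContDiff ℝ (⊤ : ℕ∞) (Function.uncurry u))
    (heq : ∀ x ∈ Set.Icc (0:ℝ) ℓ, ∀ t ≥ (0:ℝ),
      pdt (pdt u) x t + α * pdx (pdx (pdx (pdx u))) x t = 0)
    (hbc1 : ∀ t ≥ (0:ℝ),
      m * pdt (pdt u) 0 t + m * d * pdt (pdt (pdx u)) 0 t +
        α * pdx (pdx (pdx u)) 0 t = 0)
    (hbc2 : ∀ t ≥ (0:ℝ),
      m * d * pdt (pdt u) 0 t + (J + m * d ^ 2) * pdt (pdt (pdx u)) 0 t -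
        α * pdx (pdx u) 0 t = 0)
    (hclamp : ∀ t ≥ (0:ℝ), u ℓ t = 0 ∧ pdx u ℓ t = 0) :
    ∀ t ≥ (0:ℝ), energy ℓ α m d J u t = energy ℓ α m d J u 0 := by
  have su : ContDiff ℝ (⊤:ℕ∞) (uncurry u) := hu.of_le (by simp)
  have st := smooth_pdt su
  have sx := smooth_pdx su
  have sxx := smooth_pdx sx
  have sxxx := smooth_pdx sxx
  have sxxxx := smooth_pdx sxxx
  have sxt := smooth_pdt sx
  have stt := smooth_pdt st
  have stx := smooth_pdx st
  have stxx := smooth_pdx stx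
  have sxxt := smooth_pdt sxx
  have hcl : pdt (pdx u) = pdx (pdt u) := clairaut su
  have hcl2 : pdt (pdx (pdx u)) = pdx (pdx (pdt u)) :=
    (clairaut sx).trans (congrArg pdx hcl)
  have hdv : ∀ x s : ℝ, HasDerivAt
      (fun r => (pdt u x r)^2 + α * (pdx (pdx u) x r)^2)
      (2*pdt u x s*pdt (pdt u) x s + α*(2*pdx (pdx u) x s*pdt (pdx (pdx u)) x s)) s := by
    intro x s
    have h1 := ((hasDerivAt_pdt st x s).pow 2).add
      (((hasDerivAt_pdt sxx x s).pow 2).const_mul α)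
    exact h1.congr_deriv (by norm_num)
  have hv2 : ContDiff ℝ (⊤:ℕ∞)
      (uncurry (fun x t => (pdt u x t)^2 + α * (pdx (pdx u) x t)^2)) :=
    (st.pow 2).add (contDiff_const.mul (sxx.pow 2))
  have hw2 : ContDiff ℝ (⊤:ℕ∞)
      (uncurry (fun x t => 2*pdt u x t*pdt (pdt u) x t
        + α*(2*pdx (pdx u) x t*pdt (pdx (pdx u)) x t))) :=
    ((contDiff_const.mul st).mul stt).add
      (contDiff_const.mul ((contDiff_const.mul sxx).mul sxxt))
  have hE : ∀ s : ℝ, HasDerivAt (energy ℓ α m d J u)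
      ((1/2) * (∫ x in (0:ℝ)..ℓ, (2*pdt u x s*pdt (pdt u) x s
          + α*(2*pdx (pdx u) x s*pdt (pdx (pdx u)) x s)))
        + (m * (pdt u 0 s * pdt (pdt u) 0 s)
        + (m*d*(pdt (pdt (pdx u)) 0 s * pdt u 0 s + pdt (pdx u) 0 s * pdt (pdt u) 0 s)
        + (J+m*d^2) * (pdt (pdx u) 0 s * pdt (pdt (pdx u)) 0 s)))) s := by
    intro s
    have ha := hasDerivAt_pdt st 0 s
    have hb := hasDerivAt_pdt sxt 0 s
    have T1 := (paramderiv hv2 hw2 hdv ℓ s).const_mul (1/2 : ℝ)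
    have T2 := (ha.mul ha).const_mul (m/2)
    have T3 := ((hb.const_mul (m*d)).mul ha)
    have T4 := ((hb.mul hb).const_mul ((J+m*d^2)/2))
    have htot := (T1.add (T2.add (T3.add T4)))
    beta_reduce at htot
    have hfun : (fun r => (1/2) * (∫ x in (0:ℝ)..ℓ, ((pdt u x r)^2 + α * (pdx (pdx u) x r)^2))
        + ((m/2) * (pdt u 0 r * pdt u 0 r)
        + (m*d*pdt (pdx u) 0 r * pdt u 0 r
        + ((J+m*d^2)/2) * (pdt (pdx u) 0 r * pdt (pdx u) 0 r)))) = energy ℓ α m d J u := by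
      funext r
      simp only [energy]
      ring
    rw [← hfun]
    exact htot.congr_deriv (by ring)
  have hbdd : ∀ s, 0 ≤ s → pdt u ℓ s = 0 := by
    intro s hs
    exact derivZero ((sliceT su ℓ).differentiable (by simp))
      (fun r hr => (hclamp r hr).1) hs
  have hbdd2 : ∀ s, 0 ≤ s → pdt (pdx u) ℓ s = 0 := by
    intro s hs
    exact derivZero ((sliceT sx ℓ).differentiable (by simp))
      (fun r hr => (hclamp r hr).2) hs
  have hInt : ∀ s, 0 ≤ s → (∫ x in (0:ℝ)..ℓ, (2*pdt u x s*pdt (pdt u) x s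
        + α*(2*pdx (pdx u) x s*pdt (pdx (pdx u)) x s)))
      = 2*α*(pdx (pdx u) ℓ s * pdx (pdt u) ℓ s - pdx (pdx u) 0 s * pdx (pdt u) 0 s)
        - 2*α*(pdx (pdx (pdx u)) ℓ s * pdt u ℓ s - pdx (pdx (pdx u)) 0 s * pdt u 0 s) := by
    intro s hs
    have i1 : IntervalIntegrable (fun x => pdx (pdx (pdx u)) x s * pdx (pdt u) x s
        + pdx (pdx u) x s * pdx (pdx (pdt u)) x s) volume 0 ℓ :=
      (((contSlice sxxx s).mul (contSlice stx s)).add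
        ((contSlice sxx s).mul (contSlice stxx s))).intervalIntegrable 0 ℓ
    have i2 : IntervalIntegrable (fun x => pdx (pdx (pdx (pdx u))) x s * pdt u x s
        + pdx (pdx (pdx u)) x s * pdx (pdt u) x s) volume 0 ℓ :=
      (((contSlice sxxxx s).mul (contSlice st s)).add
        ((contSlice sxxx s).mul (contSlice stx s))).intervalIntegrable 0 ℓ
    have IBP1 : (∫ x in (0:ℝ)..ℓ, (pdx (pdx (pdx u)) x s * pdx (pdt u) x s
          + pdx (pdx u) x s * pdx (pdx (pdt u)) x s))
        = pdx (pdx u) ℓ s * pdx (pdt u) ℓ s - pdx (pdx u) 0 s * pdx (pdt u) 0 s :=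
      intervalIntegral.integral_deriv_mul_eq_sub
        (fun x _ => hasDerivAt_pdx sxx x s) (fun x _ => hasDerivAt_pdx stx x s)
        ((contSlice sxxx s).intervalIntegrable 0 ℓ)
        ((contSlice stxx s).intervalIntegrable 0 ℓ)
    have IBP2 : (∫ x in (0:ℝ)..ℓ, (pdx (pdx (pdx (pdx u))) x s * pdt u x s
          + pdx (pdx (pdx u)) x s * pdx (pdt u) x s))
        = pdx (pdx (pdx u)) ℓ s * pdt u ℓ s - pdx (pdx (pdx u)) 0 s * pdt u 0 s :=
      intervalIntegral.integral_deriv_mul_eq_sub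
        (fun x _ => hasDerivAt_pdx sxxx x s) (fun x _ => hasDerivAt_pdx st x s)
        ((contSlice sxxxx s).intervalIntegrable 0 ℓ)
        ((contSlice stx s).intervalIntegrable 0 ℓ)
    calc (∫ x in (0:ℝ)..ℓ, (2*pdt u x s*pdt (pdt u) x s
            + α*(2*pdx (pdx u) x s*pdt (pdx (pdx u)) x s)))
        = ∫ x in (0:ℝ)..ℓ, (2*α*(pdx (pdx (pdx u)) x s * pdx (pdt u) x s
            + pdx (pdx u) x s * pdx (pdx (pdt u)) x s)
          - 2*α*(pdx (pdx (pdx (pdx u))) x s * pdt u x s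
            + pdx (pdx (pdx u)) x s * pdx (pdt u) x s)) := by
          apply intervalIntegral.integral_congr
          intro x hx
          have hx' : x ∈ Icc 0 ℓ := by rwa [uIcc_of_le hℓ.le] at hx
          have h1 := heq x hx' s hs
          have h2 : pdt (pdx (pdx u)) x s = pdx (pdx (pdt u)) x s := by rw [hcl2]
          linear_combination (2*pdt u x s) * h1 + (2*α*pdx (pdx u) x s) * h2
      _ = 2*α*(pdx (pdx u) ℓ s * pdx (pdt u) ℓ s - pdx (pdx u) 0 s * pdx (pdt u) 0 s)
          - 2*α*(pdx (pdx (pdx u)) ℓ s * pdt u ℓ s - pdx (pdx (pdx u)) 0 s * pdt u 0 s) := by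
          rw [intervalIntegral.integral_sub (i1.const_mul (2*α)) (i2.const_mul (2*α)),
            intervalIntegral.integral_const_mul, intervalIntegral.integral_const_mul,
            IBP1, IBP2]
  have hV0 : ∀ s, 0 ≤ s → ((1/2) * (∫ x in (0:ℝ)..ℓ, (2*pdt u x s*pdt (pdt u) x s
          + α*(2*pdx (pdx u) x s*pdt (pdx (pdx u)) x s)))
        + (m * (pdt u 0 s * pdt (pdt u) 0 s)
        + (m*d*(pdt (pdt (pdx u)) 0 s * pdt u 0 s + pdt (pdx u) 0 s * pdt (pdt u) 0 s)
        + (J+m*d^2) * (pdt (pdx u) 0 s * pdt (pdt (pdx u)) 0 s)))) = 0 := by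
    intro s hs
    rw [hInt s hs, ← hcl, hbdd s hs, hbdd2 s hs]
    linear_combination (pdt u 0 s) * hbc1 s hs + (pdt (pdx u) 0 s) * hbc2 s hs
  intro t ht
  have hcont : ContinuousOn (energy ℓ α m d J u) (Icc 0 t) :=
    fun s _ => ((hE s).continuousAt).continuousWithinAt
  have hkey : ∀ s ∈ Ico (0:ℝ) t, HasDerivWithinAt (energy ℓ α m d J u) 0 (Ici s) s := by
    intro s hs
    have h := (hE s).hasDerivWithinAt (s := Ici s)
    rwa [hV0 s hs.1] at h
  exact constant_of_has_deriv_right_zero hcont hkey t (right_mem_Icc.mpr ht)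
end

section
/- Assume d·γ ≤ 2·γ*. Then there exists α₀ > 0, depending only on d, γ, γ*, such that every classical solution u of the hybrid Euler–Bernoulli beam system satisfies, for all t ≥ 0: E(t) + α₀·∫₀^t (u_t(0,τ)² + u_xt(0,τ)²) dτ ≤ E(0). -/
open MeasureTheory

open Function Metric

section helpers
variable {f : ℝ → ℝ → ℝ}

lemma pdt_hasDerivAt (hf : ContDiff ℝ (⊤ : ℕ∞) (uncurry f)) (x t : ℝ) :
    HasDerivAt (fun s => f x s) (pdt f x t) t := by
  have h : DifferentiableAt ℝ (fun s => f x s) t := by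
    have he : (fun s => f x s) = (uncurry f) ∘ (fun s => ((x : ℝ), s)) := rfl
    rw [he]
    exact DifferentiableAt.comp t (hf.differentiable (by simp) (x, t))
      ((differentiableAt_const x).prodMk differentiableAt_id)
  simpa [pdt] using h.hasDerivAt

lemma pdx_hasDerivAt (hf : ContDiff ℝ (⊤ : ℕ∞) (uncurry f)) (x t : ℝ) :
    HasDerivAt (fun y => f y t) (pdx f x t) x := by
  have h : DifferentiableAt ℝ (fun y => f y t) x := by
    have he : (fun y => f y t) = (uncurry f) ∘ (fun y => (y, t)) := rfl
    rw [he]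
    exact DifferentiableAt.comp x (hf.differentiable (by simp) (x, t))
      (differentiableAt_id.prodMk (differentiableAt_const t))
  simpa [pdx] using h.hasDerivAt

lemma pdt_eq_fderiv (hf : ContDiff ℝ (⊤ : ℕ∞) (uncurry f)) (x t : ℝ) :
    pdt f x t = fderiv ℝ (uncurry f) (x, t) (0, 1) := by
  have hc : HasDerivAt (fun s => ((x : ℝ), s)) ((0 : ℝ), (1 : ℝ)) t :=
    (hasDerivAt_const t x).prodMk (hasDerivAt_id t)
  have h := ((hf.differentiable (by simp) (x, t)).hasFDerivAt).comp_hasDerivAt t hc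
  exact ((pdt_hasDerivAt hf x t).unique h)

lemma pdx_eq_fderiv (hf : ContDiff ℝ (⊤ : ℕ∞) (uncurry f)) (x t : ℝ) :
    pdx f x t = fderiv ℝ (uncurry f) (x, t) (1, 0) := by
  have hc : HasDerivAt (fun y => (y, (t : ℝ))) ((1 : ℝ), (0 : ℝ)) x :=
    (hasDerivAt_id x).prodMk (hasDerivAt_const x t)
  have h := ((hf.differentiable (by simp) (x, t)).hasFDerivAt).comp_hasDerivAt x hc
  exact ((pdx_hasDerivAt hf x t).unique h)

lemma contDiff_pdt (hf : ContDiff ℝ (⊤ : ℕ∞) (uncurry f)) : ContDiff ℝ (⊤ : ℕ∞) (uncurry (pdt f)) := by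
  have he : uncurry (pdt f) = fun p : ℝ × ℝ => fderiv ℝ (uncurry f) p ((0 : ℝ), (1 : ℝ)) := by
    funext p
    exact pdt_eq_fderiv hf p.1 p.2
  rw [he]
  exact (hf.fderiv_right (by simp)).clm_apply contDiff_const

lemma contDiff_pdx (hf : ContDiff ℝ (⊤ : ℕ∞) (uncurry f)) : ContDiff ℝ (⊤ : ℕ∞) (uncurry (pdx f)) := by
  have he : uncurry (pdx f) = fun p : ℝ × ℝ => fderiv ℝ (uncurry f) p ((1 : ℝ), (0 : ℝ)) := by
    funext p
    exact pdx_eq_fderiv hf p.1 p.2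
  rw [he]
  exact (hf.fderiv_right (by simp)).clm_apply contDiff_const

lemma pdx_pdt_comm (hf : ContDiff ℝ (⊤ : ℕ∞) (uncurry f)) : pdx (pdt f) = pdt (pdx f) := by
  funext x t
  have hd : ∀ p : ℝ × ℝ, HasFDerivAt (uncurry f) (fderiv ℝ (uncurry f) p) p :=
    fun p => (hf.differentiable (by simp) p).hasFDerivAt
  have h2 : HasFDerivAt (fderiv ℝ (uncurry f))
      (fderiv ℝ (fderiv ℝ (uncurry f)) (x, t)) (x, t) :=
    (((hf.fderiv_right (m := (⊤ : ℕ∞)) (by simp)).differentiable (by simp)) (x, t)).hasFDerivAt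
  have hsymm := second_derivative_symmetric hd h2 ((1 : ℝ), (0 : ℝ)) ((0 : ℝ), (1 : ℝ))
  have hdiffF : DifferentiableAt ℝ (fderiv ℝ (uncurry f)) (x, t) :=
    ((hf.fderiv_right (m := (⊤ : ℕ∞)) (by simp)).differentiable (by simp)) (x, t)
  have e1 : pdx (pdt f) x t = fderiv ℝ (fderiv ℝ (uncurry f)) (x, t) (1, 0) (0, 1) := by
    rw [pdx_eq_fderiv (contDiff_pdt hf) x t]
    have he : uncurry (pdt f) = fun p : ℝ × ℝ => fderiv ℝ (uncurry f) p ((0 : ℝ), (1 : ℝ)) := by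
      funext p; exact pdt_eq_fderiv hf p.1 p.2
    rw [he, fderiv_clm_apply hdiffF (differentiableAt_const _)]
    simp
  have e2 : pdt (pdx f) x t = fderiv ℝ (fderiv ℝ (uncurry f)) (x, t) (0, 1) (1, 0) := by
    rw [pdt_eq_fderiv (contDiff_pdx hf) x t]
    have he : uncurry (pdx f) = fun p : ℝ × ℝ => fderiv ℝ (uncurry f) p ((1 : ℝ), (0 : ℝ)) := by
      funext p; exact pdx_eq_fderiv hf p.1 p.2
    rw [he, fderiv_clm_apply hdiffF (differentiableAt_const _)]
    simp
  rw [e1, e2, hsymm]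

lemma continuous_slice_x (hf : ContDiff ℝ (⊤ : ℕ∞) (uncurry f)) (t : ℝ) :
    Continuous (fun y => f y t) := by
  have he : (fun y => f y t) = (uncurry f) ∘ (fun y => (y, t)) := rfl
  rw [he]
  exact hf.continuous.comp (continuous_id.prodMk continuous_const)

lemma continuous_slice_t (hf : ContDiff ℝ (⊤ : ℕ∞) (uncurry f)) (x : ℝ) :
    Continuous (fun s => f x s) := by
  have he : (fun s => f x s) = (uncurry f) ∘ (fun s => (x, s)) := rfl
  rw [he]
  exact hf.continuous.comp (continuous_const.prodMk continuous_id)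

lemma hasDerivAt_param_integral (hf : ContDiff ℝ (⊤ : ℕ∞) (uncurry f)) (a b t₀ : ℝ) :
    HasDerivAt (fun t => ∫ x in a..b, f x t) (∫ x in a..b, pdt f x t₀) t₀ := by
  obtain ⟨C, hC⟩ : ∃ C, ∀ p ∈ (Set.uIcc a b) ×ˢ (Set.Icc (t₀ - 1) (t₀ + 1)),
      ‖uncurry (pdt f) p‖ ≤ C :=
    (isCompact_uIcc.prod isCompact_Icc).exists_bound_of_continuousOn
      ((contDiff_pdt hf).continuous.continuousOn)
  have key := intervalIntegral.hasDerivAt_integral_of_dominated_loc_of_deriv_le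
      (F := fun t x => f x t) (F' := fun t x => pdt f x t) (x₀ := t₀)
      (a := a) (b := b) (μ := volume) (bound := fun _ => C) (s := Metric.ball t₀ 1) (Metric.ball_mem_nhds t₀ one_pos)
      ?_ ?_ ?_ ?_ ?_ ?_
  · exact key.2
  · exact Filter.Eventually.of_forall fun t =>
      ((continuous_slice_x hf t).aestronglyMeasurable).restrict
  · exact (continuous_slice_x hf t₀).intervalIntegrable a b
  · exact ((continuous_slice_x (contDiff_pdt hf) t₀).aestronglyMeasurable).restrict
  · refine Filter.Eventually.of_forall fun x hx t ht => hC (x, t) ⟨?_, ?_⟩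
    · exact Set.uIoc_subset_uIcc hx
    · have : |t - t₀| ≤ 1 := le_of_lt (by simpa [Real.dist_eq] using mem_ball.mp ht)
      constructor <;> [linarith [(abs_le.mp this).1]; linarith [(abs_le.mp this).2]]
  · exact intervalIntegrable_const
  · exact Filter.Eventually.of_forall fun x _ t _ => pdt_hasDerivAt hf x t

lemma quad {d γ γs : ℝ} (hd : 0 < d) (hγ : 0 < γ) (hγs : 0 < γs) (hyp : d * γ ≤ 2 * γs)
    (a b : ℝ) :
    min γ (d * γs) / 4 * (a ^ 2 + b ^ 2) ≤ γ * a ^ 2 + d * γ * (a * b) + d * γs * b ^ 2 := by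
  have hdγ : 0 < d * γ := mul_pos hd hγ
  have hdγs : 0 < d * γs := mul_pos hd hγs
  have hsq : (d * γ) * (d * γ) ≤ (d * γ) * (2 * γs) := mul_le_mul_of_nonneg_left hyp hdγ.le
  rcases le_total γ (d * γs) with h | h
  · rw [min_eq_left h]
    have key : (d * γ / 2) ^ 2 ≤ (3 * γ / 4) * (d * γs - γ / 4) := by
      nlinarith [mul_le_mul_of_nonneg_left h hγ.le]
    nlinarith [sq_nonneg ((3 * γ / 4) * a + (d * γ / 2) * b),
      mul_nonneg (sub_nonneg.2 key) (sq_nonneg b), hγ]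
  · rw [min_eq_right h]
    have key : (d * γ / 2) ^ 2 ≤ (γ - d * γs / 4) * (3 * (d * γs) / 4) := by
      nlinarith [mul_le_mul_of_nonneg_left h hdγs.le]
    nlinarith [sq_nonneg ((γ - d * γs / 4) * a + (d * γ / 2) * b),
      mul_nonneg (sub_nonneg.2 key) (sq_nonneg b), hγ, hdγs, h]

end helpers

/-- Under `d γ ≤ 2 γ*` there is an `α₀ > 0`, depending only on `d, γ, γ*`, such that every
classical solution of the hybrid Euler–Bernoulli beam system satisfies
`E(t) + α₀ ∫₀ᵗ (u_t(0,τ)² + u_xt(0,τ)²) dτ ≤ E(0)` for all `t ≥ 0`. -/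
theorem energy_dissipation (d γ γs : ℝ)
    (hd : 0 < d) (hγ : 0 < γ) (hγs : 0 < γs) (hyp : d * γ ≤ 2 * γs) :
    ∃ α₀ > 0, ∀ ℓ α m J : ℝ, 0 < ℓ → 0 < α → 0 < m → 0 < J →
      ∀ u : ℝ → ℝ → ℝ, ContDiff ℝ (⊤ : ℕ∞) (Function.uncurry u) →
      (∀ x ∈ Set.Icc (0:ℝ) ℓ, ∀ t ≥ (0:ℝ),
        pdt (pdt u) x t + α * pdx (pdx (pdx (pdx u))) x t = 0) →
      (∀ t ≥ (0:ℝ),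
        m * pdt (pdt u) 0 t + m * d * pdt (pdt (pdx u)) 0 t + γ * pdt u 0 t +
          α * pdx (pdx (pdx u)) 0 t = 0) →
      (∀ t ≥ (0:ℝ),
        m * d * pdt (pdt u) 0 t + (J + m * d ^ 2) * pdt (pdt (pdx u)) 0 t +
          d * γ * pdt u 0 t + d * γs * pdt (pdx u) 0 t - α * pdx (pdx u) 0 t = 0) →
      (∀ t ≥ (0:ℝ), u ℓ t = 0 ∧ pdx u ℓ t = 0) →
      ∀ t ≥ (0:ℝ),
        energy ℓ α m d J u t +
          α₀ * ∫ τ in (0:ℝ)..t, ((pdt u 0 τ) ^ 2 + (pdt (pdx u) 0 τ) ^ 2) ≤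
        energy ℓ α m d J u 0 := by
  have hmin : 0 < min γ (d * γs) / 4 := by positivity
  refine ⟨min γ (d * γs) / 4, hmin, ?_⟩
  intro ℓ α m J hℓ hα hm hJ u hu hpde hb1 hb2 hclamp t ht
  -- smoothness bookkeeping
  have hut : ContDiff ℝ (⊤ : ℕ∞) (uncurry (pdt u)) := contDiff_pdt hu
  have hux : ContDiff ℝ (⊤ : ℕ∞) (uncurry (pdx u)) := contDiff_pdx hu
  have huxx : ContDiff ℝ (⊤ : ℕ∞) (uncurry (pdx (pdx u))) := contDiff_pdx hux
  have hux3 : ContDiff ℝ (⊤ : ℕ∞) (uncurry (pdx (pdx (pdx u)))) := contDiff_pdx huxx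
  have hux4 : ContDiff ℝ (⊤ : ℕ∞) (uncurry (pdx (pdx (pdx (pdx u))))) := contDiff_pdx hux3
  have hutx : ContDiff ℝ (⊤ : ℕ∞) (uncurry (pdt (pdx u))) := contDiff_pdt hux
  have huxt : ContDiff ℝ (⊤ : ℕ∞) (uncurry (pdx (pdt u))) := contDiff_pdx hut
  have huxxt : ContDiff ℝ (⊤ : ℕ∞) (uncurry (pdx (pdx (pdt u)))) := contDiff_pdx huxt
  -- commutation of partial derivatives
  have hcomm : pdx (pdt u) = pdt (pdx u) := pdx_pdt_comm hu
  have hcomm2 : pdt (pdx (pdx u)) = pdx (pdx (pdt u)) := by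
    rw [← pdx_pdt_comm hux, hcomm]
  -- smoothness of the integrand of the energy
  have hf : ContDiff ℝ (⊤ : ℕ∞)
      (uncurry (fun x s => (pdt u x s) ^ 2 + α * (pdx (pdx u) x s) ^ 2)) := by
    have he : uncurry (fun x s => (pdt u x s) ^ 2 + α * (pdx (pdx u) x s) ^ 2)
        = fun p : ℝ × ℝ => (uncurry (pdt u) p) ^ 2 + α * (uncurry (pdx (pdx u)) p) ^ 2 := rfl
    rw [he]
    exact (hut.pow 2).add (contDiff_const.mul (huxx.pow 2))
  have hg : Continuous (fun τ => (pdt u 0 τ) ^ 2 + (pdt (pdx u) 0 τ) ^ 2) :=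
    ((continuous_slice_t hut 0).pow 2).add ((continuous_slice_t hutx 0).pow 2)
  -- pointwise time derivative of the integrand
  have hpdtf : ∀ (x τ : ℝ),
      pdt (fun x s => (pdt u x s) ^ 2 + α * (pdx (pdx u) x s) ^ 2) x τ
        = 2 * pdt u x τ * pdt (pdt u) x τ
          + α * (2 * pdx (pdx u) x τ * pdt (pdx (pdx u)) x τ) := by
    intro x τ
    have h := ((pdt_hasDerivAt hut x τ).pow 2).add
      (((pdt_hasDerivAt huxx x τ).pow 2).const_mul α)
    simpa [pdt, pow_one, Pi.add_def, Pi.pow_def] using h.deriv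
  -- derivative of the total quantity at every time
  have hΦ : ∀ τ : ℝ, HasDerivAt
      (fun s => energy ℓ α m d J u s +
        min γ (d * γs) / 4 * ∫ σ in (0:ℝ)..s, ((pdt u 0 σ) ^ 2 + (pdt (pdx u) 0 σ) ^ 2))
      ((1 / 2) * (∫ x in (0:ℝ)..ℓ,
          (2 * pdt u x τ * pdt (pdt u) x τ
            + α * (2 * pdx (pdx u) x τ * pdt (pdx (pdx u)) x τ)))
        + m * (pdt u 0 τ * pdt (pdt u) 0 τ)
        + m * d * (pdt (pdt (pdx u)) 0 τ * pdt u 0 τ + pdt (pdx u) 0 τ * pdt (pdt u) 0 τ)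
        + (J + m * d ^ 2) * (pdt (pdx u) 0 τ * pdt (pdt (pdx u)) 0 τ)
        + min γ (d * γs) / 4 * ((pdt u 0 τ) ^ 2 + (pdt (pdx u) 0 τ) ^ 2)) τ := by
    intro τ
    have hI := hasDerivAt_param_integral hf 0 ℓ τ
    have hIval : (∫ x in (0:ℝ)..ℓ,
        pdt (fun x s => (pdt u x s) ^ 2 + α * (pdx (pdx u) x s) ^ 2) x τ)
        = ∫ x in (0:ℝ)..ℓ,
            (2 * pdt u x τ * pdt (pdt u) x τ
              + α * (2 * pdx (pdx u) x τ * pdt (pdx (pdx u)) x τ)) :=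
      intervalIntegral.integral_congr fun x _ => hpdtf x τ
    rw [hIval] at hI
    have hv0 := pdt_hasDerivAt hut 0 τ
    have hz0 := pdt_hasDerivAt hutx 0 τ
    have hFTC := ((hg.integral_hasStrictDerivAt 0 τ).hasDerivAt).const_mul (min γ (d * γs) / 4)
    have hE := (((hI.const_mul (1 / 2)).add ((hv0.pow 2).const_mul (m / 2))).add
        ((hz0.const_mul (m * d)).mul hv0)).add ((hz0.pow 2).const_mul ((J + m * d ^ 2) / 2))
    have htot := hE.add hFTC
    refine htot.congr_deriv ?_
    push_cast
    ring
  -- monotonicity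
  have hmono : AntitoneOn
      (fun s => energy ℓ α m d J u s +
        min γ (d * γs) / 4 * ∫ σ in (0:ℝ)..s, ((pdt u 0 σ) ^ 2 + (pdt (pdx u) 0 σ) ^ 2))
      (Set.Icc 0 t) := by
    refine antitoneOn_of_deriv_nonpos (convex_Icc 0 t)
      (fun τ _ => (hΦ τ).differentiableAt.continuousAt.continuousWithinAt)
      (fun τ _ => (hΦ τ).differentiableAt.differentiableWithinAt)
      (fun τ hτ => ?_)
    rw [interior_Icc] at hτ
    obtain ⟨hτ0, _⟩ := hτ
    rw [(hΦ τ).deriv]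
    -- boundary values at ℓ vanish
    have hVl : pdt u ℓ τ = 0 := by
      have hev : (fun s => u ℓ s) =ᶠ[nhds τ] (fun _ => (0:ℝ)) := by
        filter_upwards [Ioi_mem_nhds hτ0] with s hs
        exact (hclamp s hs.le).1
      rw [pdt, hev.deriv_eq]
      simp
    have hZl : pdt (pdx u) ℓ τ = 0 := by
      have hev : (fun s => pdx u ℓ s) =ᶠ[nhds τ] (fun _ => (0:ℝ)) := by
        filter_upwards [Ioi_mem_nhds hτ0] with s hs
        exact (hclamp s hs.le).2
      rw [pdt, hev.deriv_eq]
      simp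
    -- rewrite the mixed derivative in the integrand
    rw [hcomm2]
    -- split the integral using the PDE
    have hint1 : IntervalIntegrable
        (fun x => -(2 * α) * (pdt u x τ * pdx (pdx (pdx (pdx u))) x τ)) volume 0 ℓ :=
      (continuous_const.mul
        ((continuous_slice_x hut τ).mul (continuous_slice_x hux4 τ))).intervalIntegrable 0 ℓ
    have hint2 : IntervalIntegrable
        (fun x => (2 * α) * (pdx (pdx (pdt u)) x τ * pdx (pdx u) x τ)) volume 0 ℓ :=
      (continuous_const.mul
        ((continuous_slice_x huxxt τ).mul (continuous_slice_x huxx τ))).intervalIntegrable 0 ℓ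
    have hsplit : (∫ x in (0:ℝ)..ℓ,
        (2 * pdt u x τ * pdt (pdt u) x τ
          + α * (2 * pdx (pdx u) x τ * pdx (pdx (pdt u)) x τ)))
        = -(2 * α) * (∫ x in (0:ℝ)..ℓ, pdt u x τ * pdx (pdx (pdx (pdx u))) x τ)
          + (2 * α) * (∫ x in (0:ℝ)..ℓ, pdx (pdx (pdt u)) x τ * pdx (pdx u) x τ) := by
      rw [← intervalIntegral.integral_const_mul, ← intervalIntegral.integral_const_mul,
        ← intervalIntegral.integral_add hint1 hint2]
      refine intervalIntegral.integral_congr fun x hx => ?_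
      rw [Set.uIcc_of_le hℓ.le] at hx
      have hp := hpde x hx τ hτ0.le
      linear_combination (2 * pdt u x τ) * hp
    -- integration by parts, twice
    have hIBP1 := intervalIntegral.integral_mul_deriv_eq_deriv_mul
      (u := fun y => pdt u y τ) (u' := fun y => pdt (pdx u) y τ)
      (v := fun y => pdx (pdx (pdx u)) y τ) (v' := fun y => pdx (pdx (pdx (pdx u))) y τ)
      (a := 0) (b := ℓ)
      (fun y _ => by rw [← hcomm]; exact pdx_hasDerivAt hut y τ)
      (fun y _ => pdx_hasDerivAt hux3 y τ)
      ((continuous_slice_x hutx τ).intervalIntegrable 0 ℓ)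
      ((continuous_slice_x hux4 τ).intervalIntegrable 0 ℓ)
    have hIBP2 := intervalIntegral.integral_mul_deriv_eq_deriv_mul
      (u := fun y => pdt (pdx u) y τ) (u' := fun y => pdx (pdx (pdt u)) y τ)
      (v := fun y => pdx (pdx u) y τ) (v' := fun y => pdx (pdx (pdx u)) y τ)
      (a := 0) (b := ℓ)
      (fun y _ => by rw [hcomm]; exact pdx_hasDerivAt hutx y τ)
      (fun y _ => pdx_hasDerivAt huxx y τ)
      ((continuous_slice_x huxxt τ).intervalIntegrable 0 ℓ)
      ((continuous_slice_x hux3 τ).intervalIntegrable 0 ℓ)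
    beta_reduce at hIBP1 hIBP2
    rw [hVl] at hIBP1
    rw [hZl] at hIBP2
    have hInt : (∫ x in (0:ℝ)..ℓ,
        (2 * pdt u x τ * pdt (pdt u) x τ
          + α * (2 * pdx (pdx u) x τ * pdx (pdx (pdt u)) x τ)))
        = 2 * α * (pdt u 0 τ * pdx (pdx (pdx u)) 0 τ)
          - 2 * α * (pdt (pdx u) 0 τ * pdx (pdx u) 0 τ) := by
      rw [hsplit, hIBP1, hIBP2]
      ring
    rw [hInt]
    have hb1τ := hb1 τ hτ0.le
    have hb2τ := hb2 τ hτ0.le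
    have hEq : (1 / 2) * (2 * α * (pdt u 0 τ * pdx (pdx (pdx u)) 0 τ)
          - 2 * α * (pdt (pdx u) 0 τ * pdx (pdx u) 0 τ))
        + m * (pdt u 0 τ * pdt (pdt u) 0 τ)
        + m * d * (pdt (pdt (pdx u)) 0 τ * pdt u 0 τ + pdt (pdx u) 0 τ * pdt (pdt u) 0 τ)
        + (J + m * d ^ 2) * (pdt (pdx u) 0 τ * pdt (pdt (pdx u)) 0 τ)
        = -(γ * (pdt u 0 τ) ^ 2 + d * γ * (pdt u 0 τ * pdt (pdx u) 0 τ)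
            + d * γs * (pdt (pdx u) 0 τ) ^ 2) := by
      linear_combination (pdt u 0 τ) * hb1τ + (pdt (pdx u) 0 τ) * hb2τ
    have hq := quad hd hγ hγs hyp (pdt u 0 τ) (pdt (pdx u) 0 τ)
    linarith [hEq, hq]
  have hfin := hmono (Set.left_mem_Icc.mpr ht) (Set.right_mem_Icc.mpr ht) ht
  simpa using hfin
end

section
/- Let ℓ > 0 and let u : [0,ℓ] → ℂ be four times continuously differentiable with u'(ℓ) = 0, and set q(x) = x − ℓ. Then Re(∫₀^ℓ u''''(x)·q(x)·conj(u'(x)) dx) = ℓ·Re(u'''(0)·conj(u'(0))) + Re(u''(0)·conj(u'(0))) + (3/2)·∫₀^ℓ |u''(x)|² dx − (ℓ/2)·|u''(0)|². -/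
/-!
With `q(x) = x - ℓ`, the real part of the multiplier integrand minus the bulk term is an exact
derivative:
`q Re(u'''' ū') - (3/2)|u''|² = d/dx [q Re(u''' ū') - Re(u'' ū') - (q/2)|u''|²]`.
Writing `Re(z w̄) = ⟪w, z⟫_ℝ`, this is a product-rule computation valid in any real inner
product space, and the identity is the fundamental theorem of calculus for this primitive:
at `x = ℓ` it vanishes because `q(ℓ) = 0` and `u'(ℓ) = 0`, at `x = 0` it gives the boundary terms.
-/

open MeasureTheory ComplexConjugate Set
open scoped InnerProductSpace

theorem integral_eq_sub_of_hasDerivWithinAt_Icc {E : Type*} [NormedAddCommGroup E]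
    [NormedSpace ℝ E] [CompleteSpace E] {a b : ℝ} {f f' : ℝ → E} (hab : a ≤ b)
    (hf : ∀ x ∈ Icc a b, HasDerivWithinAt f (f' x) (Icc a b) x)
    (hf' : IntervalIntegrable f' volume a b) :
    ∫ x in a..b, f' x = f b - f a :=
  intervalIntegral.integral_eq_sub_of_hasDerivAt_of_le hab
    (fun x hx => (hf x hx).continuousWithinAt)
    (fun x hx => (hf x (Ioo_subset_Icc_self hx)).hasDerivAt (Icc_mem_nhds hx.1 hx.2)) hf'

section

variable {F : Type*} [NormedAddCommGroup F] [InnerProductSpace ℝ F]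

noncomputable def multiplierFlux (ℓ : ℝ) (v v' v'' : ℝ → F) (x : ℝ) : ℝ :=
  (x - ℓ) * ⟪v x, v'' x⟫_ℝ - ⟪v x, v' x⟫_ℝ - (x - ℓ) / 2 * ‖v' x‖ ^ 2

theorem hasDerivWithinAt_multiplierFlux {ℓ x : ℝ} {s : Set ℝ} {v v' v'' : ℝ → F} {w : F}
    (hv : HasDerivWithinAt v (v' x) s x) (hv' : HasDerivWithinAt v' (v'' x) s x)
    (hv'' : HasDerivWithinAt v'' w s x) :
    HasDerivWithinAt (multiplierFlux ℓ v v' v'')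
      ((x - ℓ) * ⟪v x, w⟫_ℝ - 3 / 2 * ‖v' x‖ ^ 2) s x := by
  have hq : HasDerivWithinAt (fun y : ℝ => y - ℓ) 1 s x := (hasDerivWithinAt_id x s).sub_const ℓ
  have h := ((hq.mul (hv.inner ℝ hv'')).sub (hv.inner ℝ hv')).sub
    ((hq.div_const 2).mul hv'.norm_sq)
  refine h.congr_deriv ?_
  rw [real_inner_self_eq_norm_sq]
  ring

end

theorem multiplier_identity_general (ℓ : ℝ) (hℓ : 0 < ℓ)
    (u1 u2 u3 u4 : ℝ → ℂ)
    (hu2 : ∀ x ∈ Set.Icc (0:ℝ) ℓ, HasDerivWithinAt u1 (u2 x) (Set.Icc 0 ℓ) x)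
    (hu3 : ∀ x ∈ Set.Icc (0:ℝ) ℓ, HasDerivWithinAt u2 (u3 x) (Set.Icc 0 ℓ) x)
    (hu4 : ∀ x ∈ Set.Icc (0:ℝ) ℓ, HasDerivWithinAt u3 (u4 x) (Set.Icc 0 ℓ) x)
    (hu4c : ContinuousOn u4 (Set.Icc 0 ℓ))
    (hbc : u1 ℓ = 0) :
    (∫ x in (0:ℝ)..ℓ, u4 x * ((x : ℂ) - (ℓ : ℂ)) * conj (u1 x)).re =
      ℓ * (u3 0 * conj (u1 0)).re + (u2 0 * conj (u1 0)).re +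
        (3 / 2) * (∫ x in (0:ℝ)..ℓ, ‖u2 x‖ ^ 2) - (ℓ / 2) * ‖u2 0‖ ^ 2 := by
  have hc1 : ContinuousOn u1 (Icc 0 ℓ) := fun x hx => (hu2 x hx).continuousWithinAt
  have hc2 : ContinuousOn u2 (Icc 0 ℓ) := fun x hx => (hu3 x hx).continuousWithinAt
  have hA : IntervalIntegrable (fun x => (x - ℓ) * ⟪u1 x, u4 x⟫_ℝ) volume 0 ℓ :=
    ContinuousOn.intervalIntegrable_of_Icc hℓ.le (by fun_prop)
  have hD : IntervalIntegrable (fun x => ‖u2 x‖ ^ 2) volume 0 ℓ :=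
    ContinuousOn.intervalIntegrable_of_Icc hℓ.le (by fun_prop)
  have hre : (∫ x in (0:ℝ)..ℓ, u4 x * ((x : ℂ) - (ℓ : ℂ)) * conj (u1 x)).re =
      ∫ x in (0:ℝ)..ℓ, (x - ℓ) * ⟪u1 x, u4 x⟫_ℝ := by
    rw [← RCLike.re_to_complex, ← intervalIntegral.intervalIntegral_re
      (ContinuousOn.intervalIntegrable_of_Icc hℓ.le (by fun_prop))]
    refine intervalIntegral.integral_congr fun x _ => ?_
    simp only [RCLike.re_to_complex, Complex.inner, mul_right_comm _ _ (conj (u1 x)),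
      ← Complex.ofReal_sub, Complex.re_mul_ofReal]
    ring
  have hflux := integral_eq_sub_of_hasDerivWithinAt_Icc hℓ.le
    (fun x hx => hasDerivWithinAt_multiplierFlux (ℓ := ℓ) (hu2 x hx) (hu3 x hx) (hu4 x hx))
    (hA.sub (hD.const_mul (3 / 2)))
  rw [intervalIntegral.integral_sub hA (hD.const_mul _), intervalIntegral.integral_const_mul]
    at hflux
  simp only [multiplierFlux, hbc, inner_zero_left, sub_self, zero_mul, zero_div, zero_sub]
    at hflux
  rw [hre, ← Complex.inner, ← Complex.inner]
  linarith

/-- The multiplier (integration-by-parts) identity for the Euler–Bernoulli operator with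
multiplier `q(x) = x − ℓ`: if `u : [0,ℓ] → ℂ` is four times continuously differentiable with
`u'(ℓ) = 0`, then
`Re ∫₀^ℓ u'''' q conj(u') dx
  = ℓ Re(u'''(0) conj(u'(0))) + Re(u''(0) conj(u'(0))) + (3/2) ∫₀^ℓ |u''|² − (ℓ/2)|u''(0)|²`. -/
theorem multiplier_identity (ℓ : ℝ) (hℓ : 0 < ℓ)
    (u u1 u2 u3 u4 : ℝ → ℂ)
    (hu1 : ∀ x ∈ Set.Icc (0:ℝ) ℓ, HasDerivWithinAt u (u1 x) (Set.Icc 0 ℓ) x)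
    (hu2 : ∀ x ∈ Set.Icc (0:ℝ) ℓ, HasDerivWithinAt u1 (u2 x) (Set.Icc 0 ℓ) x)
    (hu3 : ∀ x ∈ Set.Icc (0:ℝ) ℓ, HasDerivWithinAt u2 (u3 x) (Set.Icc 0 ℓ) x)
    (hu4 : ∀ x ∈ Set.Icc (0:ℝ) ℓ, HasDerivWithinAt u3 (u4 x) (Set.Icc 0 ℓ) x)
    (hu4c : ContinuousOn u4 (Set.Icc 0 ℓ))
    (hbc : u1 ℓ = 0) :
    (∫ x in (0:ℝ)..ℓ, u4 x * ((x : ℂ) - (ℓ : ℂ)) * conj (u1 x)).re =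
      ℓ * (u3 0 * conj (u1 0)).re + (u2 0 * conj (u1 0)).re +
        (3 / 2) * (∫ x in (0:ℝ)..ℓ, ‖u2 x‖ ^ 2) - (ℓ / 2) * ‖u2 0‖ ^ 2 :=
  multiplier_identity_general ℓ hℓ u1 u2 u3 u4 hu2 hu3 hu4 hu4c hbc
end

section
/- Let ℓ > 0, α > 0, d > 0, γ > 0, γ* > 0 with d·γ ≤ 2·γ*. Then there exists α₀ > 0, depending only on d, γ, γ*, such that for every u : [0,ℓ] → ℂ four times continuously differentiable and every v : [0,ℓ] → ℂ twice continuously differentiable with v(ℓ) = v'(ℓ) = 0, writing w = v(0) and z = v'(0): Re( ∫₀^ℓ ( −α·u''''(x)·conj(v(x)) + α·v''(x)·conj(u''(x)) ) dx − α·u'''(0)·conj(w) + α·u''(0)·conj(z) − γ·|w|² − d·γ·w·conj(z) − d·γ*·|z|² ) ≤ −α₀·(|w|² + |z|²). -/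
open MeasureTheory ComplexConjugate Set

/-!
Two integrations by parts, using `v(ℓ) = v'(ℓ) = 0`, turn `-∫ u'''' v̄` into
`u'''(0) w̄ - u''(0) z̄ - ∫ u'' v̄''`; the boundary terms cancel the explicit ones, and the
integral part becomes `α (conj K - K)` with `K = ∫ u'' v̄''`, which is purely imaginary.
What remains is minus the real part of the damping form `γ|w|² + dγ w z̄ + dγ*|z|²`. Since
`dγ* ≥ d²γ/2` and `Re (w z̄) ≥ -|w||z|`, that real part is at least
`γ (|w|² - d|w||z| + d²|z|²/2) ≥ γ (|w|²/4 + d²|z|²/6)`.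
-/

section IntegrationByParts

variable {a b : ℝ}

theorem integral_mul_conj_deriv {f f' g g' : ℝ → ℂ} (hab : a ≤ b)
    (hf : ∀ x ∈ Icc a b, HasDerivWithinAt f (f' x) (Icc a b) x)
    (hg : ∀ x ∈ Icc a b, HasDerivWithinAt g (g' x) (Icc a b) x)
    (hf' : ContinuousOn f' (Icc a b)) (hg' : ContinuousOn g' (Icc a b)) :
    ∫ x in a..b, f x * conj (g' x) =
      f b * conj (g b) - f a * conj (g a) - ∫ x in a..b, f' x * conj (g x) := by
  rw [← uIcc_of_le hab] at hf hg hf' hg'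
  exact intervalIntegral.integral_mul_deriv_eq_deriv_mul_of_hasDerivWithinAt hf
    (fun x hx ↦ (hg x hx).star) (hf'.intervalIntegrable) (hg'.star.intervalIntegrable)

theorem integral_fourth_deriv_mul_conj {u2 u3 u4 v v1 v2 : ℝ → ℂ} (hab : a ≤ b)
    (hu2 : ∀ x ∈ Icc a b, HasDerivWithinAt u2 (u3 x) (Icc a b) x)
    (hu3 : ∀ x ∈ Icc a b, HasDerivWithinAt u3 (u4 x) (Icc a b) x)
    (hu4 : ContinuousOn u4 (Icc a b))
    (hv : ∀ x ∈ Icc a b, HasDerivWithinAt v (v1 x) (Icc a b) x)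
    (hv1 : ∀ x ∈ Icc a b, HasDerivWithinAt v1 (v2 x) (Icc a b) x)
    (hv2 : ContinuousOn v2 (Icc a b)) :
    ∫ x in a..b, u4 x * conj (v x) =
      (u3 b * conj (v b) - u2 b * conj (v1 b)) - (u3 a * conj (v a) - u2 a * conj (v1 a)) +
        ∫ x in a..b, u2 x * conj (v2 x) := by
  have hu3c : ContinuousOn u3 (Icc a b) := fun x hx ↦ (hu3 x hx).continuousWithinAt
  have hv1c : ContinuousOn v1 (Icc a b) := fun x hx ↦ (hv1 x hx).continuousWithinAt
  rw [integral_mul_conj_deriv hab hu2 hv1 hu3c hv2, integral_mul_conj_deriv hab hu3 hv hu4 hv1c]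
  ring

end IntegrationByParts

/-- `K (w, z) · conj (w, z)` for the damping matrix `K = [[γ, 0], [dγ, dγ*]]`. -/
noncomputable def dampingForm (d γ γs : ℝ) (w z : ℂ) : ℂ :=
  (γ : ℂ) * ‖w‖ ^ 2 + (d : ℂ) * (γ : ℂ) * w * conj z + (d : ℂ) * (γs : ℂ) * ‖z‖ ^ 2

theorem dampingForm_re (d γ γs : ℝ) (w z : ℂ) :
    (dampingForm d γ γs w z).re = γ * ‖w‖ ^ 2 + d * γ * (w * conj z).re + d * γs * ‖z‖ ^ 2 := by
  simp only [dampingForm, Complex.add_re, Complex.mul_re, Complex.mul_im, Complex.ofReal_re,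
    Complex.ofReal_im, Complex.conj_re, Complex.conj_im, ← Complex.ofReal_pow]
  ring

theorem mul_min_le_dampingForm_re {d γ γs : ℝ} (hd : 0 ≤ d) (hγ : 0 ≤ γ) (hyp : d * γ ≤ 2 * γs)
    (w z : ℂ) :
    γ * min (1 / 4) (d ^ 2 / 6) * (‖w‖ ^ 2 + ‖z‖ ^ 2) ≤ (dampingForm d γ γs w z).re := by
  have hcross : -(‖w‖ * ‖z‖) ≤ (w * conj z).re := by
    simpa [norm_mul] using neg_le_of_abs_le (Complex.abs_re_le_norm (w * conj z))
  have hγs : d ^ 2 * γ / 2 ≤ d * γs := by nlinarith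
  set a := ‖w‖
  set b := ‖z‖
  have hsquare : a ^ 2 / 4 + d ^ 2 * b ^ 2 / 6 ≤ a ^ 2 - d * a * b + d ^ 2 * b ^ 2 / 2 := by
    nlinarith [sq_nonneg (3 * a - 2 * d * b)]
  have hmin : min (1 / 4) (d ^ 2 / 6) * (a ^ 2 + b ^ 2) ≤ a ^ 2 / 4 + d ^ 2 * b ^ 2 / 6 := by
    nlinarith [min_le_left (1 / 4 : ℝ) (d ^ 2 / 6), min_le_right (1 / 4 : ℝ) (d ^ 2 / 6),
      sq_nonneg a, sq_nonneg b]
  rw [dampingForm_re]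
  nlinarith [mul_le_mul_of_nonneg_left hcross (mul_nonneg hd hγ),
    mul_le_mul_of_nonneg_left (hmin.trans hsquare) hγ, mul_le_mul_of_nonneg_right hγs (sq_nonneg b)]

theorem hybrid_operator_dissipative_general (d γ γs : ℝ)
    (hd : 0 < d) (hγ : 0 < γ) (hyp : d * γ ≤ 2 * γs) :
    ∃ α₀ > 0, ∀ ℓ α : ℝ, 0 < ℓ → 0 < α →
      ∀ u u1 u2 u3 u4 : ℝ → ℂ,
      (∀ x ∈ Set.Icc (0:ℝ) ℓ, HasDerivWithinAt u (u1 x) (Set.Icc 0 ℓ) x) →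
      (∀ x ∈ Set.Icc (0:ℝ) ℓ, HasDerivWithinAt u1 (u2 x) (Set.Icc 0 ℓ) x) →
      (∀ x ∈ Set.Icc (0:ℝ) ℓ, HasDerivWithinAt u2 (u3 x) (Set.Icc 0 ℓ) x) →
      (∀ x ∈ Set.Icc (0:ℝ) ℓ, HasDerivWithinAt u3 (u4 x) (Set.Icc 0 ℓ) x) →
      ContinuousOn u4 (Set.Icc 0 ℓ) →
      ∀ v v1 v2 : ℝ → ℂ,
      (∀ x ∈ Set.Icc (0:ℝ) ℓ, HasDerivWithinAt v (v1 x) (Set.Icc 0 ℓ) x) →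
      (∀ x ∈ Set.Icc (0:ℝ) ℓ, HasDerivWithinAt v1 (v2 x) (Set.Icc 0 ℓ) x) →
      ContinuousOn v2 (Set.Icc 0 ℓ) →
      v ℓ = 0 → v1 ℓ = 0 →
      ((∫ x in (0:ℝ)..ℓ,
          (-(α : ℂ) * u4 x * conj (v x) + (α : ℂ) * v2 x * conj (u2 x))) -
        (α : ℂ) * u3 0 * conj (v 0) + (α : ℂ) * u2 0 * conj (v1 0) -
        (γ : ℂ) * ‖v 0‖ ^ 2 - (d : ℂ) * (γ : ℂ) * v 0 * conj (v1 0) -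
        (d : ℂ) * (γs : ℂ) * ‖v1 0‖ ^ 2).re ≤
      -α₀ * (‖v 0‖ ^ 2 + ‖v1 0‖ ^ 2) := by
  refine ⟨γ * min (1 / 4) (d ^ 2 / 6), by positivity, ?_⟩
  intro ℓ α hℓ _ u u1 u2 u3 u4 _ _ hu2 hu3 hu4 v v1 v2 hv hv1 hv2 hvℓ hv1ℓ
  have hu2c : ContinuousOn u2 (Icc 0 ℓ) := fun x hx ↦ (hu2 x hx).continuousWithinAt
  have hvc : ContinuousOn v (Icc 0 ℓ) := fun x hx ↦ (hv x hx).continuousWithinAt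
  have hintegrable {f : ℝ → ℂ} (hf : ContinuousOn f (Icc 0 ℓ)) : IntervalIntegrable f volume 0 ℓ :=
    (uIcc_of_le hℓ.le ▸ hf).intervalIntegrable
  set K := ∫ x in (0:ℝ)..ℓ, u2 x * conj (v2 x)
  have hsplit : ∫ x in (0:ℝ)..ℓ, (-(α : ℂ) * u4 x * conj (v x) + (α : ℂ) * v2 x * conj (u2 x)) =
      -α * (∫ x in (0:ℝ)..ℓ, u4 x * conj (v x)) + α * conj K := by
    have hK : conj K = ∫ x in (0:ℝ)..ℓ, v2 x * conj (u2 x) := by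
      simp [K, ← intervalIntegral.intervalIntegral_conj, mul_comm]
    simp_rw [mul_assoc]
    rw [intervalIntegral.integral_add (hintegrable (by fun_prop)) (hintegrable (by fun_prop)),
      intervalIntegral.integral_const_mul, intervalIntegral.integral_const_mul, hK]
  have hform : ((∫ x in (0:ℝ)..ℓ,
          (-(α : ℂ) * u4 x * conj (v x) + (α : ℂ) * v2 x * conj (u2 x))) -
        (α : ℂ) * u3 0 * conj (v 0) + (α : ℂ) * u2 0 * conj (v1 0) -
        (γ : ℂ) * ‖v 0‖ ^ 2 - (d : ℂ) * (γ : ℂ) * v 0 * conj (v1 0) -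
        (d : ℂ) * (γs : ℂ) * ‖v1 0‖ ^ 2) =
      α * (conj K - K) - dampingForm d γ γs (v 0) (v1 0) := by
    rw [hsplit, integral_fourth_deriv_mul_conj hℓ.le hu2 hu3 hu4 hv hv1 hv2, hvℓ, hv1ℓ,
      dampingForm]
    simp only [map_zero, mul_zero, sub_zero, zero_sub]
    ring
  rw [hform, Complex.sub_re, Complex.re_ofReal_mul, Complex.sub_re, Complex.conj_re, sub_self,
    mul_zero, zero_sub]
  linarith [mul_min_le_dampingForm_re hd.le hγ.le hyp (v 0) (v1 0)]

/-- Dissipativity of the hybrid operator `A`: under `d γ ≤ 2 γ*`, there exists `α₀ > 0`,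
depending only on `d, γ, γ*`, such that for all admissible `u, v` (with `v(ℓ) = v'(ℓ) = 0`,
`w = v(0)`, `z = v'(0)`),
`Re( ∫₀^ℓ (−α u'''' conj v + α v'' conj u'') dx − α u'''(0) conj w + α u''(0) conj z
   − γ|w|² − d γ w conj z − d γ*|z|² ) ≤ −α₀ (|w|² + |z|²)`. -/
theorem hybrid_operator_dissipative (d γ γs : ℝ)
    (hd : 0 < d) (hγ : 0 < γ) (hγs : 0 < γs) (hyp : d * γ ≤ 2 * γs) :
    ∃ α₀ > 0, ∀ ℓ α : ℝ, 0 < ℓ → 0 < α →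
      ∀ u u1 u2 u3 u4 : ℝ → ℂ,
      (∀ x ∈ Set.Icc (0:ℝ) ℓ, HasDerivWithinAt u (u1 x) (Set.Icc 0 ℓ) x) →
      (∀ x ∈ Set.Icc (0:ℝ) ℓ, HasDerivWithinAt u1 (u2 x) (Set.Icc 0 ℓ) x) →
      (∀ x ∈ Set.Icc (0:ℝ) ℓ, HasDerivWithinAt u2 (u3 x) (Set.Icc 0 ℓ) x) →
      (∀ x ∈ Set.Icc (0:ℝ) ℓ, HasDerivWithinAt u3 (u4 x) (Set.Icc 0 ℓ) x) →
      ContinuousOn u4 (Set.Icc 0 ℓ) →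
      ∀ v v1 v2 : ℝ → ℂ,
      (∀ x ∈ Set.Icc (0:ℝ) ℓ, HasDerivWithinAt v (v1 x) (Set.Icc 0 ℓ) x) →
      (∀ x ∈ Set.Icc (0:ℝ) ℓ, HasDerivWithinAt v1 (v2 x) (Set.Icc 0 ℓ) x) →
      ContinuousOn v2 (Set.Icc 0 ℓ) →
      v ℓ = 0 → v1 ℓ = 0 →
      ((∫ x in (0:ℝ)..ℓ,
          (-(α : ℂ) * u4 x * conj (v x) + (α : ℂ) * v2 x * conj (u2 x))) -
        (α : ℂ) * u3 0 * conj (v 0) + (α : ℂ) * u2 0 * conj (v1 0) -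
        (γ : ℂ) * ‖v 0‖ ^ 2 - (d : ℂ) * (γ : ℂ) * v 0 * conj (v1 0) -
        (d : ℂ) * (γs : ℂ) * ‖v1 0‖ ^ 2).re ≤
      -α₀ * (‖v 0‖ ^ 2 + ‖v1 0‖ ^ 2) :=
  hybrid_operator_dissipative_general d γ γs hd hγ hyp
end
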